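/- arXiv:2007.11863 — 3 statements merged into one kernel-verified Lean document; each statement's English description precedes it below -/
import Mathlib

section
/- For every even n ≥ 2, the edge set of the complete graph on Fin n can be partitioned into n matchings, each consisting of pairwise non-crossing chords, such that exactly n/2 of these matchings have size n/2 (and thus are perfect matchings of Fin n) and exactly n/2 of them have size n/2 − 1. -/
/-- `x` lies strictly inside the open clockwise arc from `a` to `b` on the convex
`n`-gon whose vertices are `Fin n` in clockwise cyclic order. -/
def InArc (n : ℕ) (a b x : Fin n) : Prop :=
  0 < (x - a).val ∧ (x - a).val < (b - a).val

/-- Two chords of the convex `n`-gon cross: their four endpoints are distinct and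
interleave in the cyclic order, i.e. one endpoint of the second chord lies strictly
inside each of the two open arcs determined by the first chord. -/
def Cross (n : ℕ) (e f : Sym2 (Fin n)) : Prop :=
  ∃ a b c d : Fin n, e = s(a, b) ∧ f = s(c, d) ∧ InArc n a b c ∧ InArc n b a d

/-! Let `M i` consist of the chords `{a, b}` with `a + b ≡ i (mod n)`. Chords with the same
endpoint sum are parallel, so `M i` is a non-crossing matching, and every chord lies in exactly
one `M i`. The map `a ↦ {a, i - a}` is two-to-one from the vertices with `2a ≢ i` onto `M i`;
for even `n` there are no vertices with `2a ≡ i` when `i` is odd and exactly two when `i` is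
even, so `M i` has `n / 2` chords for the `n / 2` odd `i` and `n / 2 - 1` for the even ones. -/

open Finset

section ParallelClasses

variable {n : ℕ}

def chordSum : Sym2 (Fin n) → Fin n :=
  Sym2.lift ⟨fun a b => a + b, add_comm⟩

def parallelClass (i : Fin n) : Finset (Sym2 (Fin n)) :=
  univ.filter fun e => ¬ e.IsDiag ∧ chordSum e = i

theorem mk_mem_parallelClass {i a b : Fin n} :
    s(a, b) ∈ parallelClass i ↔ a ≠ b ∧ a + b = i := by
  rw [parallelClass, mem_filter]
  simp [chordSum]

theorem not_isDiag_of_mem_parallelClass {i : Fin n} {e : Sym2 (Fin n)}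
    (he : e ∈ parallelClass i) : ¬ e.IsDiag :=
  (mem_filter.mp he).2.1

theorem eq_of_mem_parallelClass {i v : Fin n} {e f : Sym2 (Fin n)}
    (he : e ∈ parallelClass i) (hf : f ∈ parallelClass i) (hve : v ∈ e) (hvf : v ∈ f) :
    e = f := by
  obtain ⟨w, rfl⟩ := Sym2.mem_iff_exists.mp hve
  obtain ⟨w', rfl⟩ := Sym2.mem_iff_exists.mp hvf
  rw [add_left_cancel ((mk_mem_parallelClass.mp he).2.trans (mk_mem_parallelClass.mp hf).2.symm)]

-- `d - b = -(c - a)` and `a - b = -(b - a)`: the clockwise distances measured from `b` are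
-- `n` minus those measured from `a`, so `c` inside the arc `a b` puts `d` outside the arc `b a`.
theorem not_inArc_of_add_eq {a b c d : Fin n} (hsum : a + b = c + d) (hc : InArc n a b c) :
    ¬ InArc n b a d := by
  have : NeZero n := ⟨a.pos.ne'⟩
  have hdb : d - b = -(c - a) := by rw [neg_sub, sub_eq_sub_iff_add_eq_add, hsum, add_comm]
  have hca : c - a ≠ 0 := fun h => by simp [InArc, h] at hc
  have hba : b - a ≠ 0 := fun h => by simp [InArc, h] at hc
  rintro ⟨-, hd⟩
  rw [hdb, ← neg_sub b a, Fin.val_neg, Fin.val_neg, if_neg hca, if_neg hba] at hd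
  have := (b - a).isLt
  unfold InArc at hc
  omega

theorem not_cross_of_mem_parallelClass {i : Fin n} {e f : Sym2 (Fin n)}
    (he : e ∈ parallelClass i) (hf : f ∈ parallelClass i) : ¬ Cross n e f := by
  rintro ⟨a, b, c, d, rfl, rfl, hc, hd⟩
  have hsum := (mk_mem_parallelClass.mp he).2.trans (mk_mem_parallelClass.mp hf).2.symm
  exact not_inArc_of_add_eq hsum hc hd

theorem existsUnique_mk_mem_parallelClass {a b : Fin n} (hab : a ≠ b) :
    ∃! i, s(a, b) ∈ parallelClass i :=
  ⟨a + b, mk_mem_parallelClass.mpr ⟨hab, rfl⟩, fun _ hi => (mk_mem_parallelClass.mp hi).2.symm⟩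

theorem card_filter_odd_val : #{i : Fin n | Odd i.val} = n / 2 := by
  rw [card_filter, Fin.sum_univ_eq_sum_range (fun k => if Odd k then 1 else 0), ← card_filter,
    ← Nat.card_multiples n 2]
  simp only [Nat.odd_iff, Nat.dvd_iff_mod_eq_zero]
  congr 1
  exact filter_congr fun k _ => by omega

theorem card_filter_even_val (hn : Even n) : #{i : Fin n | Even i.val} = n / 2 := by
  have h := card_filter_add_card_filter_not (s := univ) (p := fun i : Fin n => Odd i.val)
  simp only [card_filter_odd_val, Nat.not_odd_iff_even, card_univ, Fintype.card_fin] at h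
  obtain ⟨m, rfl⟩ := hn
  omega

theorem card_filter_add_self_eq (hn : Even n) (i : Fin n) :
    #{a : Fin n | a + a = i} = if Odd i.val then 0 else 2 := by
  obtain ⟨m, rfl⟩ := hn
  have hi := i.isLt
  have hdouble : ∀ a : Fin (m + m),
      a + a = i ↔ a.val + a.val = i.val ∨ a.val + a.val = i.val + (m + m) := by
    intro a
    have ha := a.isLt
    rw [Fin.ext_iff, Fin.val_add]
    rcases lt_or_ge (a.val + a.val) (m + m) with h | h
    · rw [Nat.mod_eq_of_lt h]; omega
    · rw [Nat.mod_eq_sub_mod h, Nat.mod_eq_of_lt (by omega)]; omega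
  split_ifs with hodd
  · obtain ⟨k, hk⟩ := hodd
    rw [card_eq_zero, filter_eq_empty_iff]
    intro a _
    rw [hdouble]
    omega
  · obtain ⟨j, hj⟩ := Nat.not_odd_iff_even.mp hodd
    have hfix : ({a : Fin (m + m) | a + a = i} : Finset _) =
        {⟨j, by omega⟩, ⟨j + m, by omega⟩} := by
      ext a
      simp only [mem_filter, mem_univ, true_and, mem_insert, mem_singleton, hdouble, Fin.ext_iff]
      omega
    rw [hfix, card_pair (Fin.ne_of_val_ne (by simp; omega))]

theorem filter_mk_sub_eq_mk {i x y : Fin n} (hxy : x ≠ y) (hsum : x + y = i) :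
    ({a : Fin n | a + a ≠ i ∧ s(a, i - a) = s(x, y)} : Finset _) = {x, y} := by
  have : NeZero n := ⟨x.pos.ne'⟩
  ext a
  simp only [mem_filter, mem_univ, true_and, Sym2.eq_iff, mem_insert, mem_singleton]
  constructor
  · rintro ⟨-, ⟨rfl, -⟩ | ⟨rfl, -⟩⟩ <;> simp
  · rintro (rfl | rfl)
    · exact ⟨fun h => hxy (add_left_cancel (h.trans hsum.symm)),
        Or.inl ⟨rfl, by rw [← hsum, add_sub_cancel_left]⟩⟩
    · exact ⟨fun h => hxy (add_right_cancel (hsum.trans h.symm)),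
        Or.inr ⟨rfl, by rw [← hsum, add_sub_cancel_right]⟩⟩

theorem two_mul_card_parallelClass (i : Fin n) :
    2 * #(parallelClass i) = #{a : Fin n | a + a ≠ i} := by
  have : NeZero n := ⟨i.pos.ne'⟩
  have hmaps : ∀ a ∈ ({a : Fin n | a + a ≠ i} : Finset _), s(a, i - a) ∈ parallelClass i := by
    intro a ha
    exact mk_mem_parallelClass.mpr
      ⟨fun h => (mem_filter.mp ha).2 (eq_sub_iff_add_eq.mp h), add_sub_cancel a i⟩
  rw [card_eq_sum_card_fiberwise hmaps, sum_const_nat, mul_comm]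
  intro e he
  induction e using Sym2.ind with
  | _ x y =>
    obtain ⟨hxy, hsum⟩ := mk_mem_parallelClass.mp he
    rw [filter_filter, filter_mk_sub_eq_mk hxy hsum, card_pair hxy]

theorem card_parallelClass (hn : Even n) (i : Fin n) :
    #(parallelClass i) = if Odd i.val then n / 2 else n / 2 - 1 := by
  have hsplit := card_filter_add_card_filter_not (s := univ) (p := fun a : Fin n => a + a = i)
  rw [card_filter_add_self_eq hn, card_univ, Fintype.card_fin,
    ← two_mul_card_parallelClass] at hsplit
  obtain ⟨m, rfl⟩ := hn
  split_ifs at hsplit ⊢ <;> omega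

theorem card_parallelClass_eq_half_iff (hn : Even n) (i : Fin n) :
    #(parallelClass i) = n / 2 ↔ Odd i.val := by
  have := i.pos
  rw [card_parallelClass hn]
  obtain ⟨m, rfl⟩ := hn
  split_ifs with h
  · simp [h]
  · simp only [h, iff_false]
    omega

theorem card_parallelClass_eq_half_sub_one_iff (hn : Even n) (i : Fin n) :
    #(parallelClass i) = n / 2 - 1 ↔ Even i.val := by
  have := i.pos
  rw [card_parallelClass hn, ← Nat.not_odd_iff_even]
  obtain ⟨m, rfl⟩ := hn
  split_ifs with h
  · simp only [h, not_true, iff_false]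
    omega
  · simp [h]

end ParallelClasses

theorem stmt_5_general (n : ℕ) (heven : Even n) :
    ∃ M : Fin n → Finset (Sym2 (Fin n)),
      -- every element of each `M i` is a chord (two *distinct* vertices)
      (∀ i : Fin n, ∀ e ∈ M i, ¬ e.IsDiag) ∧
      -- each `M i` is a matching: its chords are pairwise vertex-disjoint
      (∀ i : Fin n, ∀ e ∈ M i, ∀ f ∈ M i, e ≠ f → ∀ v : Fin n, v ∈ e → v ∉ f) ∧
      -- the chords of each `M i` are pairwise non-crossing
      (∀ i : Fin n, ∀ e ∈ M i, ∀ f ∈ M i, ¬ Cross n e f) ∧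
      -- the matchings partition the edge set of the complete graph on `Fin n`
      (∀ a b : Fin n, a ≠ b → ∃! i : Fin n, s(a, b) ∈ M i) ∧
      -- exactly `n / 2` matchings have size `n / 2` (perfect matchings) …
      (Finset.univ.filter fun i : Fin n => (M i).card = n / 2).card = n / 2 ∧
      -- … and exactly `n / 2` matchings have size `n / 2 - 1`
      (Finset.univ.filter fun i : Fin n => (M i).card = n / 2 - 1).card = n / 2 := by
  refine ⟨parallelClass, fun _ _ => not_isDiag_of_mem_parallelClass,
    fun _ _ he _ hf hef _ hve hvf => hef (eq_of_mem_parallelClass he hf hve hvf),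
    fun _ _ he _ hf => not_cross_of_mem_parallelClass he hf,
    fun _ _ => existsUnique_mk_mem_parallelClass, ?_, ?_⟩
  · rw [filter_congr fun i _ => card_parallelClass_eq_half_iff heven i]
    exact card_filter_odd_val
  · rw [filter_congr fun i _ => card_parallelClass_eq_half_sub_one_iff heven i]
    exact card_filter_even_val heven

/-- For every even `n ≥ 2`, the edge set of the complete graph on `Fin n`
(the `n` points in convex position) can be partitioned into `n` matchings, each
consisting of pairwise non-crossing chords, such that exactly `n / 2` of these
matchings have size `n / 2` (and are thus perfect matchings of `Fin n`) and exactly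
`n / 2` of them have size `n / 2 - 1`. -/
theorem stmt_5 (n : ℕ) (hn : 2 ≤ n) (heven : Even n) :
    ∃ M : Fin n → Finset (Sym2 (Fin n)),
      -- every element of each `M i` is a chord (two *distinct* vertices)
      (∀ i : Fin n, ∀ e ∈ M i, ¬ e.IsDiag) ∧
      -- each `M i` is a matching: its chords are pairwise vertex-disjoint
      (∀ i : Fin n, ∀ e ∈ M i, ∀ f ∈ M i, e ≠ f → ∀ v : Fin n, v ∈ e → v ∉ f) ∧
      -- the chords of each `M i` are pairwise non-crossing
      (∀ i : Fin n, ∀ e ∈ M i, ∀ f ∈ M i, ¬ Cross n e f) ∧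
      -- the matchings partition the edge set of the complete graph on `Fin n`
      (∀ a b : Fin n, a ≠ b → ∃! i : Fin n, s(a, b) ∈ M i) ∧
      -- exactly `n / 2` matchings have size `n / 2` (perfect matchings) …
      (Finset.univ.filter fun i : Fin n => (M i).card = n / 2).card = n / 2 ∧
      -- … and exactly `n / 2` matchings have size `n / 2 - 1`
      (Finset.univ.filter fun i : Fin n => (M i).card = n / 2 - 1).card = n / 2 :=
  stmt_5_general n heven
end

section
/- Let G be a maximal outerplane graph on Fin n with red vertex set R of even cardinality. If G contains two non-parallel red-blue diagonals, then G is augmentable to meet R. -/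
/-- A boundary edge of the convex `n`-gon: a chord of the form `{i, i+1 (mod n)}`. -/
def IsBoundaryEdge (n : ℕ) (e : Sym2 (Fin n)) : Prop :=
  ∃ i j : Fin n, e = s(i, j) ∧ (j - i).val = 1

/-- A diagonal of the convex `n`-gon: a chord (pair of distinct vertices) that is not
a boundary edge. -/
def IsDiagonal (n : ℕ) (e : Sym2 (Fin n)) : Prop :=
  ¬ e.IsDiag ∧ ¬ IsBoundaryEdge n e

/-- A maximal outerplane graph (MOP) on `Fin n` (`n ≥ 3`): a simple graph whose edge
set consists of all `n` boundary edges together with `n - 3` pairwise non-crossing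
diagonals. -/
def IsMOP (n : ℕ) (G : SimpleGraph (Fin n)) : Prop :=
  3 ≤ n ∧
  (∀ e, IsBoundaryEdge n e → e ∈ G.edgeSet) ∧
  (∀ e ∈ G.edgeSet, IsBoundaryEdge n e ∨ IsDiagonal n e) ∧
  (∀ e ∈ G.edgeSet, ∀ f ∈ G.edgeSet, ¬ Cross n e f) ∧
  {e ∈ G.edgeSet | IsDiagonal n e}.ncard = n - 3

/-- `G` is (topologically) augmentable to meet the parity constraints with red set `R`:
there is a simple graph `H` on `Fin n`, edge-disjoint from `G`, whose edges are
pairwise non-crossing chords, in which every red vertex has odd degree and every blue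
vertex has even degree. -/
def Augmentable (n : ℕ) (G : SimpleGraph (Fin n)) (R : Set (Fin n)) : Prop :=
  ∃ H : SimpleGraph (Fin n),
    (∀ e ∈ H.edgeSet, e ∉ G.edgeSet) ∧
    (∀ e ∈ H.edgeSet, ∀ f ∈ H.edgeSet, ¬ Cross n e f) ∧
    (∀ v : Fin n, v ∈ R ↔ Odd ((H.neighborSet v).ncard))

/-- Condition (ii): `G` has two non-parallel red-blue diagonals, i.e. two diagonals,
each with exactly one red endpoint, whose four endpoints are distinct and whose colors
alternate red, blue, red, blue in clockwise cyclic order. -/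
def HasNonParallelRedBlueDiagonals (n : ℕ) (G : SimpleGraph (Fin n))
    (R : Set (Fin n)) : Prop :=
  ∃ r₁ b₁ r₂ b₂ : Fin n,
    s(r₁, b₁) ∈ G.edgeSet ∧ IsDiagonal n s(r₁, b₁) ∧
    s(r₂, b₂) ∈ G.edgeSet ∧ IsDiagonal n s(r₂, b₂) ∧
    r₁ ∈ R ∧ r₂ ∈ R ∧ b₁ ∉ R ∧ b₂ ∉ R ∧
    ((0 < (b₁ - r₁).val ∧ (b₁ - r₁).val < (r₂ - r₁).val ∧
        (r₂ - r₁).val < (b₂ - r₁).val) ∨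
     (0 < (b₂ - r₁).val ∧ (b₂ - r₁).val < (r₂ - r₁).val ∧
        (r₂ - r₁).val < (b₁ - r₁).val))

/-!
After a rotation or reflection of the polygon we may assume `r₁ = 0 < b₁ < r₂ < b₂` in `Fin n`;
whether two chords cross is then read off the linear order of their endpoints. Let `α` be the
red vertex of `(0, b₁)` closest to `b₁` (any vertex of `(0, b₁)` if there is none) and `β`
likewise in `(r₂, b₂)`. Join `α` to the red vertices in `(b₁, β)` and `β` to the red vertices
outside `[α, b₂]`. Each such chord crosses the diagonal `0 b₁` or `r₂ b₂` of `G`, so it is not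
an edge of `G`, and no two of them cross. Every other red vertex now has degree one and every
blue vertex other than `α`, `β` degree zero, so since `|R|` is even the handshake lemma lets us
fix the parities at `α` and `β` by adding the chord `αβ` or not.
-/

section Parity

open SimpleGraph

variable {V : Type*} (H : SimpleGraph V)

lemma ncard_neighborSet_sup_edge [Finite V] [DecidableEq V] {s t : V} (hst : s ≠ t)
    (h : ¬ H.Adj s t) (v : V) :
    ((H ⊔ edge s t).neighborSet v).ncard =
      (H.neighborSet v).ncard + if v = s ∨ v = t then 1 else 0 := by
  by_cases hs : v = s
  · subst hs
    have : (H ⊔ edge v t).neighborSet v = insert t (H.neighborSet v) := by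
      ext w; by_cases hw : w = t <;> simp [edge_adj, hw, hst, eq_comm]
    rw [this, Set.ncard_insert_of_notMem (s := H.neighborSet v) h]
    simp
  by_cases ht : v = t
  · subst ht
    have : (H ⊔ edge s v).neighborSet v = insert s (H.neighborSet v) := by
      ext w; by_cases hw : w = s <;> simp [edge_adj, hw, hst, eq_comm]
    rw [this, Set.ncard_insert_of_notMem (s := H.neighborSet v) fun h' => h h'.symm]
    simp
  · have : (H ⊔ edge s t).neighborSet v = H.neighborSet v := by
      ext w; simp [edge_adj, hs, ht]
    simp [this, hs, ht]

lemma sum_ncard_neighborSet_zmod_two [Fintype V] :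
    ∑ v, ((H.neighborSet v).ncard : ZMod 2) = 0 := by
  classical
  have hdeg (v : V) : (H.neighborSet v).ncard = H.degree v := by
    rw [← card_neighborSet_eq_degree, Set.ncard_eq_toFinset_card', Set.toFinset_card]
  rw [← Nat.cast_sum, ZMod.natCast_eq_zero_iff_even]
  simp only [hdeg, sum_degrees_eq_twice_card_edges, even_two_mul]

lemma iff_odd_iff_zmod_two (p : Prop) [Decidable p] (k : ℕ) :
    (p ↔ Odd k) ↔ (if p then 1 else 0 : ZMod 2) + k = 0 := by
  rw [← ZMod.natCast_eq_one_iff_odd]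
  generalize (k : ZMod 2) = x
  by_cases hp : p <;> simp only [hp, true_iff, false_iff, if_true, if_false] <;> revert x <;>
    decide

/-- By the handshake lemma and the evenness of `R`, the parities at `s` and `t` are either both
right or both wrong, and in the latter case the edge `st` repairs both. -/
theorem exists_le_sup_edge_parity [Fintype V] {R : Set V} (hR : Even R.ncard) {s t : V}
    (hst : s ≠ t) (hadj : ¬ H.Adj s t)
    (h : ∀ v, v ≠ s → v ≠ t → (v ∈ R ↔ Odd (H.neighborSet v).ncard)) :
    ∃ H' ≤ H ⊔ edge s t, ∀ v, v ∈ R ↔ Odd (H'.neighborSet v).ncard := by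
  classical
  set δ : V → ZMod 2 := fun v => (if v ∈ R then 1 else 0) + (H.neighborSet v).ncard
  have hδ (v : V) (hs : v ≠ s) (ht : v ≠ t) : δ v = 0 :=
    (iff_odd_iff_zmod_two _ _).1 (h v hs ht)
  have hsum : δ s + δ t = 0 := by
    rw [← Fintype.sum_eq_add s t hst fun v hv => hδ v hv.1 hv.2, Finset.sum_add_distrib,
      sum_ncard_neighborSet_zmod_two, Finset.sum_boole, Set.filter_mem_univ_eq_toFinset,
      ← Set.ncard_eq_toFinset_card', (ZMod.natCast_eq_zero_iff_even).2 hR, add_zero]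
  have hst' : δ s = δ t := by
    rwa [add_eq_zero_iff_eq_neg, ZMod.neg_eq_self_mod_two] at hsum
  by_cases h0 : δ s = 0
  · refine ⟨H, le_sup_left, fun v => (iff_odd_iff_zmod_two _ _).2 (?_ : δ v = 0)⟩
    by_cases hs : v = s
    · rwa [hs]
    by_cases ht : v = t
    · rwa [ht, ← hst']
    · exact hδ v hs ht
  · have h1 : δ s = 1 := by revert h0; generalize δ s = x; revert x; decide
    refine ⟨H ⊔ edge s t, le_rfl, fun v => (iff_odd_iff_zmod_two _ _).2 ?_⟩
    rw [ncard_neighborSet_sup_edge H hst hadj v, Nat.cast_add, ← add_assoc]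
    change δ v + _ = 0
    by_cases hs : v = s
    · rw [hs, if_pos (Or.inl rfl), h1, Nat.cast_one]; decide
    by_cases ht : v = t
    · rw [ht, if_pos (Or.inr rfl), ← hst', h1, Nat.cast_one]; decide
    · rw [if_neg (not_or.2 ⟨hs, ht⟩), hδ v hs ht, Nat.cast_zero, add_zero]

end Parity

lemma exists_mem_Ioo_disjoint_Ioo {ι : Type*} [LinearOrder ι] [LocallyFiniteOrder ι] (R : Set ι)
    {a b : ι} (h : (Set.Ioo a b).Nonempty) : ∃ m ∈ Set.Ioo a b, Disjoint R (Set.Ioo m b) := by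
  obtain ⟨c, hc⟩ := h
  obtain ⟨m, hm, hmax⟩ := Set.exists_max_image (Set.Ioo a b ∩ insert c R) id
    ((Set.finite_Ioo a b).inter_of_left _) ⟨c, hc, Set.mem_insert _ _⟩
  refine ⟨m, hm.1, Set.disjoint_left.2 fun v hv hvm => ?_⟩
  exact (hmax v ⟨⟨hm.1.1.trans hvm.1, hvm.2⟩, Or.inr hv⟩).not_gt hvm.1

section DoubleStar

open SimpleGraph

variable {V : Type*} {a b : V} {A B : Set V}

def doubleStar (a b : V) (A B : Set V) : SimpleGraph V :=
  fromRel fun u v => u = a ∧ v ∈ A ∨ u = b ∧ v ∈ B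

lemma odd_ncard_neighborSet_doubleStar (hAB : Disjoint A B) {v : V}
    (ha : v ≠ a) (hb : v ≠ b) :
    Odd ((doubleStar a b A B).neighborSet v).ncard ↔ v ∈ A ∪ B := by
  have hN : (doubleStar a b A B).neighborSet v = {w | w = a ∧ v ∈ A ∨ w = b ∧ v ∈ B} := by
    ext w
    simp only [doubleStar, mem_neighborSet, fromRel_adj, Set.mem_ofPred_eq]
    constructor
    · rintro ⟨-, (⟨rfl, -⟩ | ⟨rfl, -⟩) | h⟩ <;> tauto
    · rintro (⟨rfl, h⟩ | ⟨rfl, h⟩)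
      · exact ⟨ha, Or.inr (Or.inl ⟨rfl, h⟩)⟩
      · exact ⟨hb, Or.inr (Or.inr ⟨rfl, h⟩)⟩
  rw [hN]
  by_cases hA : v ∈ A
  · have hB : v ∉ B := hAB.notMem_of_mem_left hA
    simp [hA, hB]
  by_cases hB : v ∈ B <;> simp [hA, hB]

lemma mem_edgeSet_doubleStar_sup_edge {e : Sym2 V}
    (he : e ∈ (doubleStar a b A B ⊔ edge a b).edgeSet) :
    (∃ x ∈ insert b A, e = s(a, x)) ∨ ∃ y ∈ B, e = s(b, y) := by
  induction e using Sym2.ind with | _ u v =>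
  simp only [mem_edgeSet, sup_adj, doubleStar, fromRel_adj, edge_adj] at he
  rcases he with ⟨-, (⟨rfl, h⟩ | ⟨rfl, h⟩) | ⟨rfl, h⟩ | ⟨rfl, h⟩⟩ | ⟨⟨rfl, rfl⟩ | ⟨rfl, rfl⟩, -⟩
  · exact Or.inl ⟨v, Or.inr h, rfl⟩
  · exact Or.inr ⟨v, h, rfl⟩
  · exact Or.inl ⟨u, Or.inr h, Sym2.eq_swap⟩
  · exact Or.inr ⟨u, h, Sym2.eq_swap⟩
  · exact Or.inl ⟨_, Or.inl rfl, rfl⟩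
  · exact Or.inl ⟨_, Or.inl rfl, Sym2.eq_swap⟩

end DoubleStar

section Polygon

variable {n : ℕ}

lemma inArc_iff {a b x : Fin n} : InArc n a b x ↔ a < x ∧ x < b ∨ b < a ∧ (a < x ∨ x < b) := by
  unfold InArc
  rcases le_or_gt a x with hax | hxa <;> rcases le_or_gt a b with hab | hba
  · rw [Fin.sub_val_of_le hax, Fin.sub_val_of_le hab]; omega
  · rw [Fin.sub_val_of_le hax, Fin.coe_sub_iff_lt.2 hba]; omega
  · rw [Fin.coe_sub_iff_lt.2 hxa, Fin.sub_val_of_le hab]; omega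
  · rw [Fin.coe_sub_iff_lt.2 hxa, Fin.coe_sub_iff_lt.2 hba]; omega

lemma cross_mk_iff {a b c d : Fin n} :
    Cross n s(a, b) s(c, d) ↔
      InArc n a b c ∧ InArc n b a d ∨ InArc n a b d ∧ InArc n b a c := by
  constructor
  · rintro ⟨a', b', c', d', he, hf, h₁, h₂⟩
    rw [Sym2.eq_iff] at he hf
    rcases he with ⟨rfl, rfl⟩ | ⟨rfl, rfl⟩ <;> rcases hf with ⟨rfl, rfl⟩ | ⟨rfl, rfl⟩ <;> tauto
  · rintro (⟨h₁, h₂⟩ | ⟨h₁, h₂⟩)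
    · exact ⟨a, b, c, d, rfl, rfl, h₁, h₂⟩
    · exact ⟨a, b, d, c, rfl, Sym2.eq_swap, h₁, h₂⟩

lemma isDiagonal_mk_iff {a b : Fin n} :
    IsDiagonal n s(a, b) ↔ a ≠ b ∧ (b - a).val ≠ 1 ∧ (a - b).val ≠ 1 := by
  have : IsBoundaryEdge n s(a, b) ↔ (b - a).val = 1 ∨ (a - b).val = 1 := by
    constructor
    · rintro ⟨i, j, he, h⟩
      rcases Sym2.eq_iff.1 he with ⟨rfl, rfl⟩ | ⟨rfl, rfl⟩ <;> tauto
    · rintro (h | h)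
      · exact ⟨a, b, rfl, h⟩
      · exact ⟨b, a, Sym2.eq_swap, h⟩
  rw [IsDiagonal, Sym2.mk_isDiag_iff, this]
  tauto

lemma IsDiagonal.nonempty_Ioo {a b : Fin n} (h : IsDiagonal n s(a, b)) (hab : a < b) :
    (Set.Ioo a b).Nonempty := by
  obtain ⟨-, h, -⟩ := isDiagonal_mk_iff.1 h
  rw [Fin.sub_val_of_le hab.le] at h
  exact ⟨⟨a.val + 1, by omega⟩, Fin.lt_def.2 (by simp), Fin.lt_def.2 (by simp; omega)⟩

lemma inArc_add_right_iff [NeZero n] (a b x c : Fin n) :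
    InArc n (a + c) (b + c) (x + c) ↔ InArc n a b x := by
  simp only [InArc, add_sub_add_right_eq_sub]

lemma val_sub_mem_Ioo {u v : Fin n} (h : 0 < u.val ∧ u.val < v.val) :
    0 < (v - u).val ∧ (v - u).val < v.val := by
  rw [Fin.sub_val_of_le (Fin.le_def.2 h.2.le)]
  omega

lemma val_sub_eq_sub_val_sub [NeZero n] {c x : Fin n} (h : 0 < (x - c).val) :
    (c - x).val = n - (x - c).val := by
  rw [← neg_sub, Fin.val_neg', Nat.mod_eq_of_lt (by omega)]

lemma inArc_sub_left_iff [NeZero n] (a b x c : Fin n) :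
    InArc n (c - a) (c - b) (c - x) ↔ InArc n b a x := by
  simp only [InArc, sub_sub_sub_cancel_left]
  constructor <;> intro h
  · simpa using val_sub_mem_Ioo h
  · simpa using val_sub_mem_Ioo h

def IsPolygonSymmetry (φ : Fin n → Fin n) : Prop :=
  (∀ a b c d, Cross n s(φ a, φ b) s(φ c, φ d) ↔ Cross n s(a, b) s(c, d)) ∧
    ∀ a b, IsDiagonal n s(φ a, φ b) ↔ IsDiagonal n s(a, b)

lemma isPolygonSymmetry_addRight [NeZero n] (c : Fin n) :
    IsPolygonSymmetry (Equiv.addRight c) := by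
  refine ⟨fun a b x y => ?_, fun a b => ?_⟩
  · simp only [Equiv.coe_addRight, cross_mk_iff, inArc_add_right_iff]
  · simp only [Equiv.coe_addRight, isDiagonal_mk_iff, add_sub_add_right_eq_sub, ne_eq,
      add_left_inj]

lemma isPolygonSymmetry_subLeft [NeZero n] (c : Fin n) :
    IsPolygonSymmetry (Equiv.subLeft c) := by
  refine ⟨fun a b x y => ?_, fun a b => ?_⟩
  · simp only [Equiv.subLeft_apply, cross_mk_iff, inArc_sub_left_iff]
    tauto
  · simp only [Equiv.subLeft_apply, isDiagonal_mk_iff, sub_sub_sub_cancel_left, ne_eq,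
      sub_right_inj]
    tauto

lemma IsPolygonSymmetry.symm {φ : Equiv.Perm (Fin n)} (hφ : IsPolygonSymmetry φ) :
    IsPolygonSymmetry φ.symm := by
  refine ⟨fun a b c d => ?_, fun a b => ?_⟩
  · simpa using (hφ.1 (φ.symm a) (φ.symm b) (φ.symm c) (φ.symm d)).symm
  · simpa using (hφ.2 (φ.symm a) (φ.symm b)).symm

def IsNonCrossing (G : SimpleGraph (Fin n)) : Prop :=
  ∀ e ∈ G.edgeSet, ∀ f ∈ G.edgeSet, ¬ Cross n e f

lemma IsNonCrossing.comap {φ : Fin n → Fin n} (hφ : IsPolygonSymmetry φ)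
    {G : SimpleGraph (Fin n)} (hG : IsNonCrossing G) : IsNonCrossing (G.comap φ) := by
  intro e he f hf hef
  induction e using Sym2.ind with | _ a b =>
  induction f using Sym2.ind with | _ c d =>
  exact hG _ he _ hf ((hφ.1 a b c d).2 hef)

lemma Augmentable.of_comap {φ : Equiv.Perm (Fin n)} (hφ : IsPolygonSymmetry φ)
    {G : SimpleGraph (Fin n)} {R : Set (Fin n)} (h : Augmentable n (G.comap φ) (φ ⁻¹' R)) :
    Augmentable n G R := by
  obtain ⟨H, hHG, hH, hpar⟩ := h
  refine ⟨H.comap φ.symm, fun e he heG => ?_, IsNonCrossing.comap hφ.symm hH, fun v => ?_⟩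
  · induction e using Sym2.ind with | _ a b =>
    exact hHG s(φ.symm a, φ.symm b) he (by simpa using heG)
  · rw [show v ∈ R ↔ φ.symm v ∈ φ ⁻¹' R by simp, hpar]
    rw [SimpleGraph.neighborSet, ← Set.ncard_preimage_of_injective_subset_range
      φ.symm.injective (by simp)]
    rfl

def BlueEndedDiagonals (G : SimpleGraph (Fin n)) (R : Set (Fin n)) (a₁ b₁ a₂ b₂ : Fin n) :
    Prop :=
  s(a₁, b₁) ∈ G.edgeSet ∧ IsDiagonal n s(a₁, b₁) ∧ s(a₂, b₂) ∈ G.edgeSet ∧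
    IsDiagonal n s(a₂, b₂) ∧ b₁ ∉ R ∧ b₂ ∉ R

lemma BlueEndedDiagonals.comap {φ : Fin n → Fin n} (hφ : IsPolygonSymmetry φ)
    {G : SimpleGraph (Fin n)} {R : Set (Fin n)} {a₁ b₁ a₂ b₂ : Fin n}
    (h : BlueEndedDiagonals G R (φ a₁) (φ b₁) (φ a₂) (φ b₂)) :
    BlueEndedDiagonals (G.comap φ) (φ ⁻¹' R) a₁ b₁ a₂ b₂ := by
  obtain ⟨hd₁, hdg₁, hd₂, hdg₂, hb₁, hb₂⟩ := h
  exact ⟨hd₁, (hφ.2 _ _).1 hdg₁, hd₂, (hφ.2 _ _).1 hdg₂, hb₁, hb₂⟩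

def IsSpoke (α β b₁ b₂ : Fin n) (e : Sym2 (Fin n)) : Prop :=
  (∃ x, b₁ < x ∧ x ≤ β ∧ e = s(α, x)) ∨ ∃ y, (y < α ∨ b₂ < y) ∧ e = s(β, y)

lemma IsSpoke.not_cross {α β b₁ b₂ : Fin n} (hα : α < b₁) (hβ : β < b₂) {e f : Sym2 (Fin n)}
    (he : IsSpoke α β b₁ b₂ e) (hf : IsSpoke α β b₁ b₂ f) : ¬ Cross n e f := by
  rcases he with ⟨x, hx, hxβ, rfl⟩ | ⟨y, hy, rfl⟩ <;>
    rcases hf with ⟨x', hx', hx'β, rfl⟩ | ⟨y', hy', rfl⟩ <;>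
    simp only [cross_mk_iff, inArc_iff] <;> omega

lemma IsSpoke.cross [NeZero n] {α β b₁ r₂ b₂ : Fin n}
    (h : 0 < α ∧ α < b₁ ∧ b₁ < r₂ ∧ r₂ < β ∧ β < b₂) {e : Sym2 (Fin n)}
    (he : IsSpoke α β b₁ b₂ e) : Cross n s(0, b₁) e ∨ Cross n s(r₂, b₂) e := by
  rcases he with ⟨x, hx, hxβ, rfl⟩ | ⟨y, hy, rfl⟩ <;> simp only [cross_mk_iff, inArc_iff] <;> omega

theorem augmentable_of_lt [NeZero n] {G : SimpleGraph (Fin n)} {R : Set (Fin n)}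
    (hG : IsNonCrossing G) (hR : Even R.ncard) {b₁ r₂ b₂ : Fin n}
    (hc : BlueEndedDiagonals G R 0 b₁ r₂ b₂) (h : 0 < b₁ ∧ b₁ < r₂ ∧ r₂ < b₂) :
    Augmentable n G R := by
  obtain ⟨hd₁, hdg₁, hd₂, hdg₂, hb₁, hb₂⟩ := hc
  obtain ⟨h₁, h₂, h₃⟩ := h
  obtain ⟨α, ⟨hα₀, hαb₁⟩, hαR⟩ := exists_mem_Ioo_disjoint_Ioo R (hdg₁.nonempty_Ioo h₁)
  obtain ⟨β, ⟨hr₂β, hβb₂⟩, hβR⟩ := exists_mem_Ioo_disjoint_Ioo R (hdg₂.nonempty_Ioo h₃)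
  set A := {x ∈ R | b₁ < x ∧ x < β}
  set B := {y ∈ R | y < α ∨ b₂ < y}
  have hαβ : α ≠ β := by omega
  have hAB : Disjoint A B := Set.disjoint_left.2 fun x hA hB => by
    simp only [A, B, Set.mem_ofPred_eq] at hA hB; omega
  obtain ⟨H, hH, hHpar⟩ : ∃ H ≤ doubleStar α β A B ⊔ SimpleGraph.edge α β,
      ∀ v, v ∈ R ↔ Odd (H.neighborSet v).ncard := by
    refine exists_le_sup_edge_parity _ hR hαβ ?_ fun v hα hβ => ?_
    · rintro ⟨-, (⟨-, hβA⟩ | ⟨h, -⟩) | ⟨h, -⟩ | ⟨-, hαB⟩⟩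
      · exact hβA.2.2.false
      · exact hαβ h
      · exact hαβ h.symm
      · exact hαB.2.elim (lt_irrefl α) fun h => by omega
    rw [odd_ncard_neighborSet_doubleStar hAB hα hβ]
    refine ⟨fun hv => ?_, fun hv => hv.elim (·.1) (·.1)⟩
    have hb₁v : v ≠ b₁ := fun h => hb₁ (h ▸ hv)
    have hb₂v : v ≠ b₂ := fun h => hb₂ (h ▸ hv)
    have hvα := Set.disjoint_left.1 hαR hv
    have hvβ := Set.disjoint_left.1 hβR hv
    simp only [Set.mem_Ioo, not_and_or, not_lt] at hvα hvβ
    simp only [A, B, Set.mem_union, Set.mem_ofPred_eq, hv, true_and]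
    omega
  have hspoke (e) (he : e ∈ H.edgeSet) : IsSpoke α β b₁ b₂ e := by
    rcases mem_edgeSet_doubleStar_sup_edge (SimpleGraph.edgeSet_mono hH he) with
      ⟨x, hx | hx, rfl⟩ | ⟨y, hy, rfl⟩
    · exact Or.inl ⟨x, by rw [hx]; omega, hx.le, rfl⟩
    · exact Or.inl ⟨x, hx.2.1, hx.2.2.le, rfl⟩
    · exact Or.inr ⟨y, hy.2, rfl⟩
  refine ⟨H, fun e he heG => ?_, fun e he f hf => (hspoke e he).not_cross hαb₁ hβb₂ (hspoke f hf),
    hHpar⟩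
  exact ((hspoke e he).cross ⟨hα₀, hαb₁, h₂, hr₂β, hβb₂⟩).elim (hG _ hd₁ _ heG) (hG _ hd₂ _ heG)

lemma augmentable_of_lt_of_isPolygonSymmetry [NeZero n] {φ : Equiv.Perm (Fin n)}
    (hφ : IsPolygonSymmetry φ) {G : SimpleGraph (Fin n)} {R : Set (Fin n)}
    (hG : IsNonCrossing G) (hR : Even R.ncard)
    {b₁ r₂ b₂ : Fin n} (hc : BlueEndedDiagonals G R (φ 0) (φ b₁) (φ r₂) (φ b₂))
    (h : 0 < b₁ ∧ b₁ < r₂ ∧ r₂ < b₂) : Augmentable n G R := by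
  refine Augmentable.of_comap hφ (augmentable_of_lt (hG.comap hφ) ?_ (hc.comap hφ) h)
  rwa [Set.ncard_preimage_of_injective_subset_range φ.injective (by simp)]

end Polygon

/-- Let `G` be a maximal outerplane graph on `Fin n` with red vertex set
`R` of even cardinality.  If `G` contains two non-parallel red-blue diagonals, then
`G` is augmentable to meet `R`. -/
theorem stmt_10 (n : ℕ) (G : SimpleGraph (Fin n)) (hG : IsMOP n G)
    (R : Set (Fin n)) (hR : Even R.ncard)
    (hnp : HasNonParallelRedBlueDiagonals n G R) :
    Augmentable n G R := by
  obtain ⟨-, -, -, hnc, -⟩ := hG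
  obtain ⟨r₁, b₁, r₂, b₂, hd₁, hdg₁, hd₂, hdg₂, -, -, hb₁, hb₂, hord⟩ := hnp
  have : NeZero n := ⟨r₁.pos.ne'⟩
  have hc : BlueEndedDiagonals G R r₁ b₁ r₂ b₂ := ⟨hd₁, hdg₁, hd₂, hdg₂, hb₁, hb₂⟩
  rcases hord with h | h
  · refine augmentable_of_lt_of_isPolygonSymmetry (isPolygonSymmetry_addRight r₁) hnc hR
      (b₁ := b₁ - r₁) (r₂ := r₂ - r₁) (b₂ := b₂ - r₁) (by simpa using hc) ?_
    simp only [Fin.lt_def, Fin.val_zero]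
    omega
  · refine augmentable_of_lt_of_isPolygonSymmetry (isPolygonSymmetry_subLeft r₁) hnc hR
      (b₁ := r₁ - b₁) (r₂ := r₁ - r₂) (b₂ := r₁ - b₂) (by simpa using hc) ?_
    have hb₁ : 0 < (b₁ - r₁).val := by omega
    have hr₂ : 0 < (r₂ - r₁).val := by omega
    simp only [Fin.lt_def, Fin.val_zero, val_sub_eq_sub_val_sub hb₁, val_sub_eq_sub_val_sub hr₂,
      val_sub_eq_sub_val_sub h.1]
    omega
end

section
/- Let G be a maximal outerplane graph on Fin n and let R ⊆ Fin n have even cardinality. Then there exists a simple graph H on Fin n, edge-disjoint from G, whose edges are pairwise non-crossing chords, such that the number of vertices v at which the parity condition fails (that is, v ∈ R but v has even degree in H, or v ∉ R but v has odd degree in H) is at most two. -/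
/-!
A non-crossing graph on the convex `n`-gon has a vertex `c` of degree at most two: if some chord
`xy` skips a vertex, take one of minimal clockwise length; then `x + 1` can only see `x` and
`x + 2`, since a longer chord from it would either be a shorter skipping chord or cross `xy`.
Join `c` to every red vertex it is not already adjacent to. Each such leaf is satisfied, every
other vertex except `c` is satisfied unless it is a red neighbour of `c`, and since `|R|` is even,
`c` is satisfied whenever it has an even number of red neighbours. Either way at most two
constraints fail.
-/

theorem InArc.ne_left {n : ℕ} {a b x : Fin n} (h : InArc n a b x) : x ≠ a := by
  rintro rfl
  simp [InArc, Fin.sub_def] at h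

theorem InArc.ne_right {n : ℕ} {a b x : Fin n} (h : InArc n a b x) : x ≠ b := by
  rintro rfl
  exact lt_irrefl _ h.2

theorem not_cross_of_mem_of_mem {n : ℕ} {c : Fin n} {e f : Sym2 (Fin n)}
    (he : c ∈ e) (hf : c ∈ f) : ¬ Cross n e f := by
  rintro ⟨a, b, x, y, rfl, rfl, hx, hy⟩
  rw [Sym2.mem_iff] at he hf
  rcases he with rfl | rfl <;> rcases hf with hcx | hcy
  · exact hx.ne_left hcx.symm
  · exact hy.ne_right hcy.symm
  · exact hx.ne_right hcx.symm
  · exact hy.ne_left hcy.symm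

theorem Fin.val_sub_add_val_sub {n : ℕ} {a b : Fin n} (h : a ≠ b) :
    (a - b).val + (b - a).val = n := by
  rcases lt_or_gt_of_ne h with hab | hba
  · rw [Fin.coe_sub_iff_lt.mpr hab, Fin.sub_val_of_le hab.le]
    have := Fin.lt_def.mp hab
    omega
  · rw [Fin.coe_sub_iff_lt.mpr hba, Fin.sub_val_of_le hba.le]
    have := Fin.lt_def.mp hba
    omega

theorem cross_of_sub_val_lt {n : ℕ} {a b c d : Fin n} (hc₀ : 0 < (c - a).val)
    (hcb : (c - a).val < (b - a).val) (hbd : (b - a).val < (d - a).val) :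
    Cross n s(a, b) s(c, d) := by
  have : NeZero n := NeZero.of_pos a.pos
  refine ⟨a, b, c, d, rfl, rfl, ⟨hc₀, hcb⟩, ?_⟩
  have hdb : (d - b).val = (d - a).val - (b - a).val := by
    rw [← sub_sub_sub_cancel_right d b a, Fin.sub_val_of_le (Fin.le_def.mpr hbd.le)]
  have hab : (a - b).val = n - (b - a).val := by
    have hne : a ≠ b := by
      rintro rfl
      simp [Fin.sub_def] at hcb
    have := Fin.val_sub_add_val_sub hne
    omega
  have := (d - a).isLt
  constructor <;> omega

section NonCrossing

variable {n : ℕ} {G : SimpleGraph (Fin n)}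

theorem neighborSet_eq_empty_of_forall_adj_sub_val_lt_two (hn : 3 ≤ n)
    (hshort : ∀ x y, G.Adj x y → (y - x).val < 2) (v : Fin n) : G.neighborSet v = ∅ := by
  refine Set.eq_empty_of_forall_notMem fun w hw => ?_
  have := Fin.val_sub_add_val_sub hw.ne
  have := hshort v w hw
  have := hshort w v hw.symm
  omega

theorem neighborSet_add_one_subset_of_minimal [NeZero n] (hn : 3 ≤ n)
    (hnc : ∀ e ∈ G.edgeSet, ∀ f ∈ G.edgeSet, ¬ Cross n e f) {x y : Fin n} (hxy : G.Adj x y)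
    (hlong : 2 ≤ (y - x).val)
    (hmin : ∀ x' y', G.Adj x' y' → 2 ≤ (y' - x').val → (y - x).val ≤ (y' - x').val) :
    G.neighborSet (x + 1) ⊆ {x, x + 2} := by
  intro w hw
  simp only [Set.mem_insert_iff, Set.mem_singleton_iff]
  have hone : (1 : Fin n).val = 1 := by rw [Fin.val_one', Nat.mod_eq_of_lt (by omega)]
  have htwo : (2 : Fin n).val = 2 := by simpa using Nat.mod_eq_of_lt (by omega : 2 < n)
  have hx1 : ((x + 1) - x).val = 1 := by rw [add_sub_cancel_left, hone]
  set d := w - x with hd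
  have hw_eq : w = x + d := (add_sub_cancel x w).symm
  have hd_ne_one : d.val ≠ 1 := fun h => hw.ne <| by
    rw [hw_eq, Fin.ext (h.trans hone.symm)]
  have hd_not_short : ¬ (3 ≤ d.val ∧ d.val ≤ (y - x).val) := by
    rintro ⟨hd3, hdy⟩
    have hw1 : (w - (x + 1)).val = d.val - 1 := by
      rw [sub_add_eq_sub_sub, ← hd, Fin.sub_val_of_le (Fin.le_def.mpr (by omega)), hone]
    have := hmin _ _ hw (by omega)
    omega
  have hd_not_far : ¬ (y - x).val < d.val := fun hyd =>
    hnc _ hxy _ hw (cross_of_sub_val_lt (by omega) (by omega) hyd)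
  have hd_lt := d.isLt
  rcases (by omega : d.val = 0 ∨ d.val = 2) with h | h
  · left
    rw [hw_eq, Fin.val_eq_zero_iff.mp h, add_zero]
  · right
    rw [hw_eq, Fin.ext (h.trans htwo.symm)]

theorem exists_ncard_neighborSet_le_two (hn : 3 ≤ n)
    (hnc : ∀ e ∈ G.edgeSet, ∀ f ∈ G.edgeSet, ¬ Cross n e f) :
    ∃ c, (G.neighborSet c).ncard ≤ 2 := by
  classical
  have : NeZero n := ⟨by omega⟩
  by_cases hlong : ∃ p : Fin n × Fin n, G.Adj p.1 p.2 ∧ 2 ≤ (p.2 - p.1).val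
  · obtain ⟨p, hp⟩ := hlong
    obtain ⟨⟨x, y⟩, hxy, hmin⟩ := Finset.exists_min_image
      {p : Fin n × Fin n | G.Adj p.1 p.2 ∧ 2 ≤ (p.2 - p.1).val} (fun p => (p.2 - p.1).val)
      ⟨p, by simpa using hp⟩
    simp only [Finset.mem_filter, Finset.mem_univ, true_and] at hxy hmin
    have hsub := neighborSet_add_one_subset_of_minimal hn hnc hxy.1 hxy.2
      fun x' y' h h2 => hmin (x', y') ⟨h, h2⟩
    refine ⟨x + 1, (Set.ncard_le_ncard hsub).trans ?_⟩
    exact (Set.ncard_insert_le _ _).trans (by simp)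
  · push Not at hlong
    refine ⟨0, ?_⟩
    rw [neighborSet_eq_empty_of_forall_adj_sub_val_lt_two hn (fun x y => hlong (x, y)),
      Set.ncard_empty]
    omega

end NonCrossing

section Star

variable {V : Type*}

def starGraphOn (c : V) (S : Set V) : SimpleGraph V :=
  .fromRel fun u v => u = c ∧ v ∈ S

def parityDefects (H : SimpleGraph V) (R : Set V) : Set V :=
  {v | ¬ (v ∈ R ↔ Odd ((H.neighborSet v).ncard))}

variable {c : V} {S : Set V}

theorem starGraphOn_adj {u v : V} :
    (starGraphOn c S).Adj u v ↔ u ≠ v ∧ (u = c ∧ v ∈ S ∨ v = c ∧ u ∈ S) :=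
  SimpleGraph.fromRel_adj _ u v

theorem mem_of_mem_edgeSet_starGraphOn {e : Sym2 V} (he : e ∈ (starGraphOn c S).edgeSet) :
    c ∈ e := by
  induction e with
  | _ u v =>
    rcases (starGraphOn_adj.mp he).2 with ⟨rfl, -⟩ | ⟨rfl, -⟩
    · exact Sym2.mem_mk_left _ _
    · exact Sym2.mem_mk_right _ _

theorem disjoint_edgeSet_starGraphOn {G : SimpleGraph V} (hS : ∀ v ∈ S, ¬ G.Adj c v) :
    Disjoint (starGraphOn c S).edgeSet G.edgeSet := by
  refine Set.disjoint_left.mpr fun e he hG => ?_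
  induction e with
  | _ u v =>
    rcases (starGraphOn_adj.mp he).2 with ⟨rfl, hv⟩ | ⟨rfl, hu⟩
    · exact hS v hv hG
    · exact hS u hu (G.adj_symm hG)

theorem neighborSet_starGraphOn_self (hc : c ∉ S) : (starGraphOn c S).neighborSet c = S := by
  ext v
  rw [SimpleGraph.mem_neighborSet, starGraphOn_adj]
  constructor
  · rintro ⟨-, ⟨-, hv⟩ | ⟨-, hcS⟩⟩
    exacts [hv, absurd hcS hc]
  · intro hv
    exact ⟨fun h => hc (h ▸ hv), Or.inl ⟨rfl, hv⟩⟩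

theorem neighborSet_starGraphOn_of_mem (hc : c ∉ S) {v : V} (hv : v ∈ S) :
    (starGraphOn c S).neighborSet v = {c} := by
  ext u
  rw [SimpleGraph.mem_neighborSet, starGraphOn_adj, Set.mem_singleton_iff]
  constructor
  · rintro ⟨-, ⟨rfl, -⟩ | ⟨rfl, -⟩⟩
    exacts [absurd hv hc, rfl]
  · rintro rfl
    exact ⟨fun h => hc (h ▸ hv), Or.inr ⟨rfl, hv⟩⟩

theorem neighborSet_starGraphOn_of_notMem {v : V} (hvc : v ≠ c) (hv : v ∉ S) :
    (starGraphOn c S).neighborSet v = ∅ := by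
  refine Set.eq_empty_of_forall_notMem fun u hu => ?_
  rcases (starGraphOn_adj.mp hu).2 with ⟨h, -⟩ | ⟨-, h⟩
  exacts [hvc h, hv h]

variable {R N : Set V}

theorem parityDefects_starGraphOn_subset :
    parityDefects (starGraphOn c (R \ insert c N)) R ⊆ insert c (R ∩ N) := by
  intro v hv
  have hcS : c ∉ R \ insert c N := fun h => h.2 (Set.mem_insert c N)
  by_cases hvc : v = c
  · subst hvc
    exact Set.mem_insert v _
  by_cases hvS : v ∈ R \ insert c N
  · refine absurd ?_ hv
    rw [neighborSet_starGraphOn_of_mem hcS hvS, Set.ncard_singleton]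
    exact iff_of_true hvS.1 odd_one
  · have hvR : v ∈ R := by
      by_contra hvR
      refine hv (iff_of_false hvR ?_)
      rw [neighborSet_starGraphOn_of_notMem hvc hvS, Set.ncard_empty]
      exact Nat.not_odd_zero
    have hvN : v ∈ N := by
      by_contra hvN
      exact hvS ⟨hvR, by simp [hvc, hvN]⟩
    exact Set.mem_insert_of_mem c ⟨hvR, hvN⟩

variable [Finite V]

theorem notMem_parityDefects_starGraphOn_self (hN : c ∉ N) (hR : Even R.ncard)
    (hRN : Even (R ∩ N).ncard) : c ∉ parityDefects (starGraphOn c (R \ insert c N)) R := by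
  have hcS : c ∉ R \ insert c N := fun h => h.2 (Set.mem_insert c N)
  have hcard := Set.ncard_inter_add_ncard_sdiff_eq_ncard R (insert c N)
  simp only [parityDefects, Set.mem_ofPred_eq, not_not, neighborSet_starGraphOn_self hcS]
  rw [Nat.even_iff] at hR hRN
  rw [Nat.odd_iff]
  by_cases hcR : c ∈ R
  · rw [Set.inter_insert_of_mem hcR, Set.ncard_insert_of_notMem fun h => hN h.2] at hcard
    exact iff_of_true hcR (by omega)
  · rw [Set.inter_insert_of_notMem hcR] at hcard
    exact iff_of_false hcR (by omega)

theorem ncard_parityDefects_starGraphOn_le_two (hN : c ∉ N) (hR : Even R.ncard)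
    (hRN : (R ∩ N).ncard ≤ 2) :
    (parityDefects (starGraphOn c (R \ insert c N)) R).ncard ≤ 2 := by
  rcases (by omega : (R ∩ N).ncard ≤ 1 ∨ (R ∩ N).ncard = 2) with hle | htwo
  · calc _ ≤ (insert c (R ∩ N)).ncard := Set.ncard_le_ncard parityDefects_starGraphOn_subset
      _ ≤ (R ∩ N).ncard + 1 := Set.ncard_insert_le _ _
      _ ≤ 2 := by omega
  · have hc := notMem_parityDefects_starGraphOn_self hN hR (htwo ▸ even_two)
    calc _ ≤ (R ∩ N).ncard := Set.ncard_le_ncard fun v hv =>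
          (parityDefects_starGraphOn_subset hv).resolve_left fun h => hc (by subst h; exact hv)
      _ = 2 := htwo

end Star

/-- Let `G` be a maximal outerplane graph on `Fin n` and let
`R ⊆ Fin n` have even cardinality.  Then there exists a simple graph `H` on `Fin n`,
edge-disjoint from `G`, whose edges are pairwise non-crossing chords, such that the
number of vertices `v` at which the parity condition fails (`v ∈ R` but `v` has even
degree in `H`, or `v ∉ R` but `v` has odd degree in `H`) is at most two. -/
theorem stmt_14 (n : ℕ) (G : SimpleGraph (Fin n)) (hG : IsMOP n G)
    (R : Set (Fin n)) (hR : Even R.ncard) :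
    ∃ H : SimpleGraph (Fin n),
      (∀ e ∈ H.edgeSet, e ∉ G.edgeSet) ∧
      (∀ e ∈ H.edgeSet, ∀ f ∈ H.edgeSet, ¬ Cross n e f) ∧
      {v : Fin n | ¬ (v ∈ R ↔ Odd ((H.neighborSet v).ncard))}.ncard ≤ 2 := by
  obtain ⟨hn, -, -, hnc, -⟩ := hG
  obtain ⟨c, hc⟩ := exists_ncard_neighborSet_le_two hn hnc
  have hcN : c ∉ G.neighborSet c := G.notMem_neighborSet_self
  refine ⟨starGraphOn c (R \ insert c (G.neighborSet c)), ?_, ?_, ?_⟩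
  · refine fun e he => Set.disjoint_left.mp (disjoint_edgeSet_starGraphOn ?_) he
    exact fun v hv hcv => hv.2 (Set.mem_insert_of_mem c hcv)
  · exact fun e he f hf =>
      not_cross_of_mem_of_mem (mem_of_mem_edgeSet_starGraphOn he) (mem_of_mem_edgeSet_starGraphOn hf)
  · exact ncard_parityDefects_starGraphOn_le_two hcN hR
      ((Set.ncard_le_ncard Set.inter_subset_right).trans hc)
end
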